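/- Let p ≥ 1, 1 ≤ k < p, λ > 0. Let U₂ ∈ ℝ^{p×k} and Û₂ ∈ ℝ^{p×k} have orthonormal columns, write Π₂ := U₂U₂ᵀ and Π̂₂ := Û₂Û₂ᵀ. Let φ_1, …, φ_n ∈ ℝ^p, ε_1, …, ε_n ∈ ℝ, β, β̂ ∈ ℝ^p, and δ ∈ ℝ^p with δ = Π₂ δ. Set r_τ := φ_τᵀ(β + δ) + ε_τ, S := λ I_k + Σ_{τ=1}^n Û₂ᵀ φ_τ φ_τᵀ Û₂, and δ̂ := Û₂ S^{-1} Σ_{τ=1}^n Û₂ᵀ φ_τ ( r_τ − φ_τᵀ β̂ ). Then ‖ δ̂ − Π̂₂ δ ‖_{λ I_p + Σ_{τ=1}^n φ_τ φ_τᵀ} ≤ ‖ Σ_{τ=1}^n Û₂ᵀ φ_τ φ_τᵀ (Π₂ − Π̂₂) δ ‖_{S^{-1}} + ‖ Σ_{τ=1}^n Û₂ᵀ φ_τ φ_τᵀ (β − β̂) ‖_{S^{-1}} + ‖ Σ_{τ=1}^n Û₂ᵀ φ_τ ε_τ ‖_{S^{-1}} + √λ · ‖δ‖₂. -/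

import Mathlib

/-!
Write `ψ_τ = Û₂ᵀ φ_τ`, `w = Û₂ᵀ δ` and `G = λ I_p + ∑ φ_τ φ_τᵀ`, so that `Û₂ᵀ G Û₂ = S`.
Since `Π₂ δ = δ`, the data vector splits as `∑ (r_τ - φ_τᵀ β̂) ψ_τ = v₁ + v₂ + v₃ + (S - λ I) w`,
hence `δ̂ - Π̂₂ δ = Û₂ S⁻¹ (v₁ + v₂ + v₃ - λ w)`, whose `G`-norm is the `S⁻¹`-norm of
`v₁ + v₂ + v₃ - λ w`. The triangle inequality leaves `λ ‖w‖_{S⁻¹}`, which is at most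
`√λ ‖w‖₂ ≤ √λ ‖δ‖₂` because `S ⪰ λ I` and `Û₂` has orthonormal columns.
-/

open Matrix

/-- The weighted (semi-)norm `‖x‖_A := √(xᵀ A x)`. -/
noncomputable def wnorm {k : ℕ} (A : Matrix (Fin k) (Fin k) ℝ) (x : Fin k → ℝ) : ℝ :=
  Real.sqrt (x ⬝ᵥ A.mulVec x)

section DotProduct

variable {m : Type*} [Fintype m]

lemma sqrt_dotProduct_self_eq_norm (x : m → ℝ) : √(x ⬝ᵥ x) = ‖WithLp.toLp 2 x‖ := by
  rw [← Real.sqrt_sq (norm_nonneg (WithLp.toLp 2 x)), ← real_inner_self_eq_norm_sq,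
    EuclideanSpace.inner_toLp_toLp, star_trivial]

lemma sqrt_dotProduct_self_add_le (x y : m → ℝ) :
    √((x + y) ⬝ᵥ (x + y)) ≤ √(x ⬝ᵥ x) + √(y ⬝ᵥ y) := by
  simpa only [sqrt_dotProduct_self_eq_norm, WithLp.toLp_add] using norm_add_le _ _

lemma transpose_mulVec_dotProduct_self_le {n : Type*} [Fintype n] [DecidableEq n]
    {U : Matrix m n ℝ} (hU : Uᵀ * U = 1) (x : m → ℝ) : Uᵀ *ᵥ x ⬝ᵥ Uᵀ *ᵥ x ≤ x ⬝ᵥ x := by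
  have hcross : x ⬝ᵥ U *ᵥ (Uᵀ *ᵥ x) = Uᵀ *ᵥ x ⬝ᵥ Uᵀ *ᵥ x := by
    rw [dotProduct_mulVec, ← mulVec_transpose]
  have hsq : U *ᵥ (Uᵀ *ᵥ x) ⬝ᵥ U *ᵥ (Uᵀ *ᵥ x) = Uᵀ *ᵥ x ⬝ᵥ Uᵀ *ᵥ x := by
    rw [dotProduct_mulVec, ← mulVec_transpose, mulVec_mulVec, hU, one_mulVec]
  have h := dotProduct_self_star_nonneg (x - U *ᵥ (Uᵀ *ᵥ x))
  simp only [star_trivial, sub_dotProduct, dotProduct_sub, dotProduct_comm _ x, hcross, hsq] at h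
  linarith

end DotProduct

lemma posDef_of_posSemidef_sub_smul_one {m : Type*} [Fintype m] [DecidableEq m]
    {S : Matrix m m ℝ} {lam : ℝ} (hlam : 0 < lam) (hS : (S - lam • 1).PosSemidef) : S.PosDef := by
  simpa using (PosDef.one.smul hlam).add_posSemidef hS

section WeightedNorm

variable {k : ℕ}

open scoped MatrixOrder in
lemma wnorm_add_le {A : Matrix (Fin k) (Fin k) ℝ} (hA : A.PosSemidef) (x y : Fin k → ℝ) :
    wnorm A (x + y) ≤ wnorm A x + wnorm A y := by
  obtain ⟨B, rfl⟩ := CStarAlgebra.nonneg_iff_eq_star_mul_self.mp hA.nonneg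
  have hB : ∀ z : Fin k → ℝ, z ⬝ᵥ (star B * B) *ᵥ z = B *ᵥ z ⬝ᵥ B *ᵥ z := fun z => by
    rw [← mulVec_mulVec, dotProduct_mulVec, star_eq_conjTranspose,
      conjTranspose_eq_transpose_of_trivial, ← mulVec_transpose, transpose_transpose]
  simp only [wnorm, hB]
  rw [mulVec_add]
  exact sqrt_dotProduct_self_add_le (B *ᵥ x) (B *ᵥ y)

lemma wnorm_smul (A : Matrix (Fin k) (Fin k) ℝ) (c : ℝ) (x : Fin k → ℝ) :
    wnorm A (c • x) = |c| * wnorm A x := by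
  rw [wnorm, wnorm, mulVec_smul, dotProduct_smul, smul_dotProduct, smul_eq_mul, smul_eq_mul,
    ← mul_assoc, ← sq, Real.sqrt_mul (sq_nonneg c), Real.sqrt_sq_eq_abs]

lemma wnorm_sub_le {A : Matrix (Fin k) (Fin k) ℝ} (hA : A.PosSemidef) (x y : Fin k → ℝ) :
    wnorm A (x - y) ≤ wnorm A x + wnorm A y := by
  rw [sub_eq_add_neg]
  refine (wnorm_add_le hA x (-y)).trans_eq ?_
  rw [← neg_one_smul ℝ y, wnorm_smul, abs_neg, abs_one, one_mul]

lemma wnorm_mulVec {p : ℕ} (G : Matrix (Fin p) (Fin p) ℝ) (U : Matrix (Fin p) (Fin k) ℝ)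
    (a : Fin k → ℝ) : wnorm G (U *ᵥ a) = wnorm (Uᵀ * G * U) a := by
  rw [wnorm, wnorm, ← mulVec_mulVec, ← mulVec_mulVec, dotProduct_mulVec _ Uᵀ,
    ← mulVec_transpose, transpose_transpose]

lemma wnorm_inv_mulVec {A : Matrix (Fin k) (Fin k) ℝ} (hA : IsUnit A.det) (v : Fin k → ℝ) :
    wnorm A (A⁻¹ *ᵥ v) = wnorm A⁻¹ v := by
  rw [wnorm, wnorm, mulVec_mulVec, mul_nonsing_inv A hA, one_mulVec, dotProduct_comm]

/-- With `z = S⁻¹ w`, expanding `0 ≤ ‖w - λ z‖²` and using `λ ‖z‖² ≤ zᵀ S z = wᵀ z`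
gives `λ wᵀ S⁻¹ w ≤ ‖w‖²`. -/
lemma mul_wnorm_inv_le {S : Matrix (Fin k) (Fin k) ℝ} {lam : ℝ} (hlam : 0 < lam)
    (hS : (S - lam • 1).PosSemidef) (w : Fin k → ℝ) :
    lam * wnorm S⁻¹ w ≤ √lam * √(w ⬝ᵥ w) := by
  have hSpd : S.PosDef := posDef_of_posSemidef_sub_smul_one hlam hS
  set z := S⁻¹ *ᵥ w
  have hSz : S *ᵥ z = w := by
    rw [mulVec_mulVec, mul_nonsing_inv S ((isUnit_iff_isUnit_det S).mp hSpd.isUnit), one_mulVec]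
  have hz : lam * (z ⬝ᵥ z) ≤ w ⬝ᵥ z := by
    have h := hS.dotProduct_mulVec_nonneg z
    rw [star_trivial, sub_mulVec, dotProduct_sub, hSz, smul_mulVec, one_mulVec,
      dotProduct_smul, smul_eq_mul, dotProduct_comm z w] at h
    linarith
  have hwz : lam * (w ⬝ᵥ z) ≤ w ⬝ᵥ w := by
    have h := dotProduct_self_star_nonneg (w - lam • z)
    simp only [star_trivial, sub_dotProduct, dotProduct_sub, smul_dotProduct, dotProduct_smul,
      smul_eq_mul, dotProduct_comm z w] at h
    nlinarith
  calc lam * wnorm S⁻¹ w = √(lam ^ 2 * (w ⬝ᵥ z)) := by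
        rw [wnorm, Real.sqrt_mul (sq_nonneg lam), Real.sqrt_sq hlam.le]
    _ ≤ √(lam * (w ⬝ᵥ w)) := Real.sqrt_le_sqrt (by nlinarith)
    _ = √lam * √(w ⬝ᵥ w) := Real.sqrt_mul hlam.le _

end WeightedNorm

section RegularizedGram

variable {m ι : Type*} [Fintype m] [DecidableEq m] [Fintype ι]

noncomputable def regGram (lam : ℝ) (φ : ι → m → ℝ) : Matrix m m ℝ :=
  lam • 1 + ∑ τ, vecMulVec (φ τ) (φ τ)

lemma posSemidef_regGram_sub_smul_one (lam : ℝ) (φ : ι → m → ℝ) :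
    (regGram lam φ - lam • 1).PosSemidef := by
  rw [regGram, add_sub_cancel_left]
  exact posSemidef_sum _ fun τ _ => by simpa using posSemidef_vecMulVec_self_star (φ τ)

lemma regGram_mulVec (lam : ℝ) (φ : ι → m → ℝ) (w : m → ℝ) :
    regGram lam φ *ᵥ w = lam • w + ∑ τ, (φ τ ⬝ᵥ w) • φ τ := by
  simp only [regGram, add_mulVec, smul_mulVec, one_mulVec, sum_mulVec, vecMulVec_mulVec,
    op_smul_eq_smul]

lemma transpose_mul_regGram_mul {n : Type*} [Fintype n] [DecidableEq n] {U : Matrix m n ℝ}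
    (hU : Uᵀ * U = 1) (lam : ℝ) (φ : ι → m → ℝ) :
    Uᵀ * regGram lam φ * U = regGram lam (fun τ => Uᵀ *ᵥ φ τ) := by
  simp only [regGram, Matrix.mul_add, Matrix.add_mul, Matrix.mul_smul, Matrix.smul_mul,
    Matrix.mul_one, hU, Matrix.mul_sum, Matrix.sum_mul, mul_vecMulVec, vecMulVec_mul,
    ← mulVec_transpose]

end RegularizedGram

lemma sum_response_smul_sub_regGram_mulVec {m n ι : Type*} [Fintype m] [Fintype n]
    [DecidableEq n] [Fintype ι] (lam : ℝ) (P : Matrix m m ℝ) (U : Matrix m n ℝ)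
    (φ : ι → m → ℝ) (ε : ι → ℝ) (β βhat δ : m → ℝ) (hδ : δ = P *ᵥ δ)
    (r : ι → ℝ) (hr : ∀ τ, r τ = φ τ ⬝ᵥ (β + δ) + ε τ) :
    ∑ τ, (r τ - φ τ ⬝ᵥ βhat) • Uᵀ *ᵥ φ τ - regGram lam (fun τ => Uᵀ *ᵥ φ τ) *ᵥ (Uᵀ *ᵥ δ)
      = ∑ τ, (φ τ ⬝ᵥ ((P - U * Uᵀ) *ᵥ δ)) • Uᵀ *ᵥ φ τ
        + ∑ τ, (φ τ ⬝ᵥ (β - βhat)) • Uᵀ *ᵥ φ τ + ∑ τ, ε τ • Uᵀ *ᵥ φ τ - lam • Uᵀ *ᵥ δ := by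
  have hcoef : ∀ τ, r τ - φ τ ⬝ᵥ βhat - Uᵀ *ᵥ φ τ ⬝ᵥ Uᵀ *ᵥ δ
      = φ τ ⬝ᵥ ((P - U * Uᵀ) *ᵥ δ) + φ τ ⬝ᵥ (β - βhat) + ε τ := fun τ => by
    rw [hr, sub_mulVec, ← hδ, ← mulVec_mulVec, dotProduct_sub, dotProduct_mulVec (φ τ) U,
      ← mulVec_transpose, dotProduct_add, dotProduct_sub]
    ring
  calc _ = ∑ τ, (r τ - φ τ ⬝ᵥ βhat - Uᵀ *ᵥ φ τ ⬝ᵥ Uᵀ *ᵥ δ) • Uᵀ *ᵥ φ τ - lam • Uᵀ *ᵥ δ := by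
        simp only [regGram_mulVec, sub_smul, Finset.sum_sub_distrib]
        abel
    _ = _ := by simp only [hcoef, add_smul, Finset.sum_add_distrib]

theorem stmt17_general {p k n : ℕ}
    (lam : ℝ) (hlam : 0 < lam)
    (U₂ Uhat₂ : Matrix (Fin p) (Fin k) ℝ)
    (hUhat₂ : Uhat₂ᵀ * Uhat₂ = 1)
    (φ : Fin n → Fin p → ℝ) (ε : Fin n → ℝ) (β βhat : Fin p → ℝ)
    (δ : Fin p → ℝ) (hδ : δ = (U₂ * U₂ᵀ).mulVec δ)
    (r : Fin n → ℝ) (hr : ∀ τ, r τ = φ τ ⬝ᵥ (β + δ) + ε τ)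
    (S : Matrix (Fin k) (Fin k) ℝ)
    (hS : S = lam • (1 : Matrix (Fin k) (Fin k) ℝ)
        + ∑ τ, vecMulVec (Uhat₂ᵀ.mulVec (φ τ)) (Uhat₂ᵀ.mulVec (φ τ)))
    (δhat : Fin p → ℝ)
    (hδhat : δhat
        = Uhat₂.mulVec (S⁻¹.mulVec (∑ τ, (r τ - φ τ ⬝ᵥ βhat) • Uhat₂ᵀ.mulVec (φ τ)))) :
    wnorm (lam • (1 : Matrix (Fin p) (Fin p) ℝ) + ∑ τ, vecMulVec (φ τ) (φ τ))
        (δhat - (Uhat₂ * Uhat₂ᵀ).mulVec δ)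
      ≤ wnorm S⁻¹
          (∑ τ, (φ τ ⬝ᵥ ((U₂ * U₂ᵀ - Uhat₂ * Uhat₂ᵀ).mulVec δ)) • Uhat₂ᵀ.mulVec (φ τ))
        + wnorm S⁻¹ (∑ τ, (φ τ ⬝ᵥ (β - βhat)) • Uhat₂ᵀ.mulVec (φ τ))
        + wnorm S⁻¹ (∑ τ, ε τ • Uhat₂ᵀ.mulVec (φ τ))
        + Real.sqrt lam * Real.sqrt (δ ⬝ᵥ δ) := by
  set v₁ := ∑ τ, (φ τ ⬝ᵥ ((U₂ * U₂ᵀ - Uhat₂ * Uhat₂ᵀ) *ᵥ δ)) • Uhat₂ᵀ *ᵥ φ τ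
  set v₂ := ∑ τ, (φ τ ⬝ᵥ (β - βhat)) • Uhat₂ᵀ *ᵥ φ τ
  set v₃ := ∑ τ, ε τ • Uhat₂ᵀ *ᵥ φ τ
  set w := Uhat₂ᵀ *ᵥ δ
  have hSgram : S = regGram lam (fun τ => Uhat₂ᵀ *ᵥ φ τ) := hS
  have hSlam : (S - lam • 1).PosSemidef := hSgram ▸ posSemidef_regGram_sub_smul_one _ _
  have hSpd : S.PosDef := posDef_of_posSemidef_sub_smul_one hlam hSlam
  have hdet : IsUnit S.det := (isUnit_iff_isUnit_det S).mp hSpd.isUnit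
  have herr : δhat - (Uhat₂ * Uhat₂ᵀ) *ᵥ δ = Uhat₂ *ᵥ (S⁻¹ *ᵥ (v₁ + v₂ + v₃ - lam • w)) := by
    rw [← sum_response_smul_sub_regGram_mulVec lam _ _ φ ε β βhat δ hδ r hr, ← hSgram,
      mulVec_sub, mulVec_mulVec (M := S⁻¹), nonsing_inv_mul S hdet, one_mulVec, mulVec_sub,
      hδhat, ← mulVec_mulVec δ Uhat₂]
  have hinv : S⁻¹.PosSemidef := hSpd.inv.posSemidef
  rw [herr, wnorm_mulVec, ← regGram, transpose_mul_regGram_mul hUhat₂, ← hSgram,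
    wnorm_inv_mulVec hdet]
  calc wnorm S⁻¹ (v₁ + v₂ + v₃ - lam • w)
      ≤ wnorm S⁻¹ v₁ + wnorm S⁻¹ v₂ + wnorm S⁻¹ v₃ + lam * wnorm S⁻¹ w := by
        refine (wnorm_sub_le hinv _ _).trans ?_
        rw [wnorm_smul, abs_of_pos hlam]
        gcongr
        exact (wnorm_add_le hinv _ _).trans (by gcongr; exact wnorm_add_le hinv _ _)
    _ ≤ wnorm S⁻¹ v₁ + wnorm S⁻¹ v₂ + wnorm S⁻¹ v₃ + √lam * √(w ⬝ᵥ w) :=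
        add_le_add_right (mul_wnorm_inv_le hlam hSlam w) _
    _ ≤ wnorm S⁻¹ v₁ + wnorm S⁻¹ v₂ + wnorm S⁻¹ v₃ + √lam * √(δ ⬝ᵥ δ) := by
        gcongr
        exact transpose_mulVec_dotProduct_self_le hUhat₂ δ

/-- residual-component error decomposition, estimated subspace.
With `Π₂ = U₂U₂ᵀ`, `Π̂₂ = Û₂Û₂ᵀ`, `δ = Π₂ δ`, `r_τ = φ_τᵀ(β + δ) + ε_τ`,
`S = λ I_k + ∑ Û₂ᵀ φ_τ φ_τᵀ Û₂` and
`δ̂ = Û₂ S⁻¹ ∑ Û₂ᵀ φ_τ (r_τ − φ_τᵀ β̂)`, one has the four-term decomposition of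
`‖δ̂ − Π̂₂ δ‖` in the regularized Gram norm. -/
theorem stmt17 {p k n : ℕ} (hp : 1 ≤ p) (hk1 : 1 ≤ k) (hkp : k < p)
    (lam : ℝ) (hlam : 0 < lam)
    (U₂ Uhat₂ : Matrix (Fin p) (Fin k) ℝ)
    (hU₂ : U₂ᵀ * U₂ = 1) (hUhat₂ : Uhat₂ᵀ * Uhat₂ = 1)
    (φ : Fin n → Fin p → ℝ) (ε : Fin n → ℝ) (β βhat : Fin p → ℝ)
    (δ : Fin p → ℝ) (hδ : δ = (U₂ * U₂ᵀ).mulVec δ)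
    (r : Fin n → ℝ) (hr : ∀ τ, r τ = φ τ ⬝ᵥ (β + δ) + ε τ)
    (S : Matrix (Fin k) (Fin k) ℝ)
    (hS : S = lam • (1 : Matrix (Fin k) (Fin k) ℝ)
        + ∑ τ, vecMulVec (Uhat₂ᵀ.mulVec (φ τ)) (Uhat₂ᵀ.mulVec (φ τ)))
    (δhat : Fin p → ℝ)
    (hδhat : δhat
        = Uhat₂.mulVec (S⁻¹.mulVec (∑ τ, (r τ - φ τ ⬝ᵥ βhat) • Uhat₂ᵀ.mulVec (φ τ)))) :
    wnorm (lam • (1 : Matrix (Fin p) (Fin p) ℝ) + ∑ τ, vecMulVec (φ τ) (φ τ))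
        (δhat - (Uhat₂ * Uhat₂ᵀ).mulVec δ)
      ≤ wnorm S⁻¹
          (∑ τ, (φ τ ⬝ᵥ ((U₂ * U₂ᵀ - Uhat₂ * Uhat₂ᵀ).mulVec δ)) • Uhat₂ᵀ.mulVec (φ τ))
        + wnorm S⁻¹ (∑ τ, (φ τ ⬝ᵥ (β - βhat)) • Uhat₂ᵀ.mulVec (φ τ))
        + wnorm S⁻¹ (∑ τ, ε τ • Uhat₂ᵀ.mulVec (φ τ))
        + Real.sqrt lam * Real.sqrt (δ ⬝ᵥ δ) :=
  stmt17_general lam hlam U₂ Uhat₂ hUhat₂ φ ε β βhat δ hδ r hr S hS δhat hδhat
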